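/- Fix integers k ≥ 1, n ≥ 1 and 1 ≤ m ≤ k. Let y_m = 1 / (1 + (1 − 2/(2k+1))^{2m−2}), μ_m = 1/2 − 1/(4k) + y_m/(2k), p₀ = ((1/2 − 1/(4k))y_m) / ((1/2 − 1/(4k))y_m + (1/2 + 1/(4k))(1 − y_m)), and p₁ = ((1/2 + 1/(4k))y_m) / ((1/2 + 1/(4k))y_m + (1/2 − 1/(4k))(1 − y_m)). Let ω be a Bernoulli(μ_m) random variable and, conditional on ω, let X₁, …, X_n be i.i.d. Bernoulli(p_ω). Then there exists a function h : {0, 1, …, n} → {0,1} such that P( h(Σ_{i=1}^n X_i) ≠ ω ) ≤ exp(−n/(72k²)). -/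

import Mathlib

noncomputable section

/-- `y_m = 1 / (1 + (1 - 2/(2k+1))^(2m-2))`. -/
def yk (k m : ℕ) : ℝ := 1 / (1 + (1 - 2/(2*(k:ℝ) + 1)) ^ (2*m - 2))

/-- `μ_m = 1/2 - 1/(4k) + y_m/(2k)`. -/
def muk (k m : ℕ) : ℝ := 1/2 - 1/(4*(k:ℝ)) + yk k m / (2*(k:ℝ))

/-- `p₀`: the conditional probability of the high forecast given `ω = 0` under `I(m)`. -/
def p0k (k m : ℕ) : ℝ :=
  ((1/2 - 1/(4*(k:ℝ))) * yk k m)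
    / ((1/2 - 1/(4*(k:ℝ))) * yk k m + (1/2 + 1/(4*(k:ℝ))) * (1 - yk k m))

/-- `p₁`: the conditional probability of the high forecast given `ω = 1` under `I(m)`. -/
def p1k (k m : ℕ) : ℝ :=
  ((1/2 + 1/(4*(k:ℝ))) * yk k m)
    / ((1/2 + 1/(4*(k:ℝ))) * yk k m + (1/2 - 1/(4*(k:ℝ))) * (1 - yk k m))

/-!
Let the omniscient expert guess `ω = 1` exactly when the number of high forecasts is at least
`n (p₀ + p₁) / 2`. This threshold lies at distance `(p₁ - p₀) / 2` from both conditional means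
`n p₀` and `n p₁`, so either kind of error is a Hoeffding tail of a binomial distribution and has
probability at most `exp (-n (p₁ - p₀)² / 2)`. It remains to check that `p₁ - p₀ ≥ 1 / (6k)`:
writing `e = 1/(4k)` and `y = y_m`, one has `p₁ - p₀ ≥ 8 e y (1 - y)`, and `m ≤ k` keeps `y_m`
in `[1/2, 9/10]`, where `y (1 - y) ≥ 1/12`.
-/

open Real Finset

open MeasureTheory ProbabilityTheory unitInterval in
theorem one_sub_add_mul_exp_le_exp {p : ℝ} (hp₀ : 0 ≤ p) (hp₁ : p ≤ 1) (t : ℝ) :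
    1 - p + p * exp t ≤ exp (p * t + t ^ 2 / 8) := by
  let q : I := ⟨p, hp₀, hp₁⟩
  have hoeffding := (hasSubgaussianMGF_of_mem_Icc (μ := Ber(true, false, q))
    (X := fun b : Bool => if b then (1 : ℝ) else 0) (a := 0) (b := 1) (by fun_prop)
    (ae_of_all _ fun b => by cases b <;> simp)).mgf_le t
  norm_num [mgf, integral_bernoulliMeasure, q] at hoeffding
  calc 1 - p + p * exp t
      = exp (p * t) * (p * exp (t * (1 - p)) + (1 - p) * exp (-(t * p))) := by
        rw [mul_add, mul_left_comm, mul_left_comm (exp _), ← exp_add, ← exp_add]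
        ring_nf
        rw [exp_zero]; ring
    _ ≤ exp (p * t) * exp (t ^ 2 / 8) := by
        gcongr; exact hoeffding.trans_eq (congrArg exp (by ring))
    _ = exp (p * t + t ^ 2 / 8) := (exp_add _ _).symm

def numTrue {n : ℕ} (s : Fin n → Bool) : ℕ := ∑ i, if s i then 1 else 0

def bernoulliWeight {n : ℕ} (p : ℝ) (s : Fin n → Bool) : ℝ := ∏ i, if s i then p else 1 - p

section BernoulliSums

variable {n : ℕ} {p : ℝ}

theorem bernoulliWeight_nonneg (hp₀ : 0 ≤ p) (hp₁ : p ≤ 1) (s : Fin n → Bool) :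
    0 ≤ bernoulliWeight p s :=
  prod_nonneg fun i _ => by split <;> linarith

theorem sum_bernoulliWeight_mul_exp (p l : ℝ) :
    ∑ s : Fin n → Bool, bernoulliWeight p s * exp (l * numTrue s) = (1 - p + p * exp l) ^ n := by
  have hterm (s : Fin n → Bool) : bernoulliWeight p s * exp (l * numTrue s)
      = ∏ i, if s i then p * exp l else 1 - p := by
    simp only [bernoulliWeight, numTrue, Nat.cast_sum, mul_sum, exp_sum, ← prod_mul_distrib]
    exact prod_congr rfl fun i _ => by split <;> simp
  rw [show 1 - p + p * exp l = ∑ b : Bool, if b then p * exp l else 1 - p by simp [add_comm],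
    Fintype.sum_pow]
  exact sum_congr rfl fun s _ => hterm s

theorem sum_filter_bernoulliWeight_le (hp₀ : 0 ≤ p) (hp₁ : p ≤ 1)
    {Q : (Fin n → Bool) → Prop} [DecidablePred Q] (l a : ℝ)
    (hQ : ∀ s, Q s → l * a ≤ l * numTrue s) :
    ∑ s with Q s, bernoulliWeight p s ≤ exp (n * (p * l + l ^ 2 / 8) - l * a) := by
  calc ∑ s with Q s, bernoulliWeight p s
      ≤ ∑ s with Q s, bernoulliWeight p s * exp (l * numTrue s - l * a) := by
        refine sum_le_sum fun s hs => le_mul_of_one_le_right (bernoulliWeight_nonneg hp₀ hp₁ s) ?_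
        exact one_le_exp (sub_nonneg.2 (hQ s (mem_filter.1 hs).2))
    _ ≤ ∑ s, bernoulliWeight p s * exp (l * numTrue s - l * a) :=
        sum_le_sum_of_subset_of_nonneg (filter_subset _ _) fun s _ _ =>
          mul_nonneg (bernoulliWeight_nonneg hp₀ hp₁ s) (exp_pos _).le
    _ = (1 - p + p * exp l) ^ n / exp (l * a) := by
        simp only [exp_sub, mul_div_assoc', ← sum_div, sum_bernoulliWeight_mul_exp]
    _ ≤ exp (p * l + l ^ 2 / 8) ^ n / exp (l * a) := by
        gcongr
        exact one_sub_add_mul_exp_le_exp hp₀ hp₁ l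
    _ = exp (n * (p * l + l ^ 2 / 8) - l * a) := by
        rw [exp_sub, exp_nat_mul]

theorem sum_bernoulliWeight_upper_tail_le (hp₀ : 0 ≤ p) (hp₁ : p ≤ 1) {t : ℝ} (ht : 0 ≤ t) :
    ∑ s : Fin n → Bool with n * (p + t) ≤ numTrue s, bernoulliWeight p s
      ≤ exp (-(2 * n * t ^ 2)) := by
  convert sum_filter_bernoulliWeight_le hp₀ hp₁ (4 * t) (n * (p + t))
    fun s hs => mul_le_mul_of_nonneg_left hs (by positivity) using 2
  ring

theorem sum_bernoulliWeight_lower_tail_le (hp₀ : 0 ≤ p) (hp₁ : p ≤ 1) {t : ℝ} (ht : 0 ≤ t) :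
    ∑ s : Fin n → Bool with numTrue s ≤ n * (p - t), bernoulliWeight p s
      ≤ exp (-(2 * n * t ^ 2)) := by
  convert sum_filter_bernoulliWeight_le hp₀ hp₁ (-(4 * t)) (n * (p - t))
    fun s hs => mul_le_mul_of_nonpos_left hs (by linarith) using 2
  ring

end BernoulliSums

def thresholdTest (n : ℕ) (p₀ p₁ : ℝ) (c : ℕ) : Bool := decide (n * (p₀ + p₁) / 2 ≤ c)

theorem thresholdTest_error_le {n : ℕ} {μ p₀ p₁ : ℝ} (hμ₀ : 0 ≤ μ) (hμ₁ : μ ≤ 1)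
    (hp₀ : 0 ≤ p₀) (hp₁ : p₁ ≤ 1) (hp : p₀ ≤ p₁) :
    ∑ b : Bool, ∑ s : Fin n → Bool,
        ((if b then μ else 1 - μ) * bernoulliWeight (if b then p₁ else p₀) s) *
          (if thresholdTest n p₀ p₁ (numTrue s) = b then (0 : ℝ) else 1)
      ≤ exp (-(n * (p₁ - p₀) ^ 2 / 2)) := by
  set t := (p₁ - p₀) / 2
  have ht : 0 ≤ t := div_nonneg (sub_nonneg.2 hp) zero_le_two
  have hmiss : ∑ s : Fin n → Bool, (μ * bernoulliWeight p₁ s) *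
      (if thresholdTest n p₀ p₁ (numTrue s) = true then (0 : ℝ) else 1)
      ≤ μ * ∑ s : Fin n → Bool with numTrue s ≤ n * (p₁ - t), bernoulliWeight p₁ s := by
    rw [sum_filter, mul_sum]
    refine sum_le_sum fun s _ => ?_
    have := mul_nonneg hμ₀ (bernoulliWeight_nonneg (hp₀.trans hp) hp₁ s)
    unfold thresholdTest
    split_ifs <;> simp_all [t]; linarith
  have hfalse_alarm : ∑ s : Fin n → Bool, ((1 - μ) * bernoulliWeight p₀ s) *
      (if thresholdTest n p₀ p₁ (numTrue s) = false then (0 : ℝ) else 1)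
      ≤ (1 - μ) * ∑ s : Fin n → Bool with n * (p₀ + t) ≤ numTrue s, bernoulliWeight p₀ s := by
    rw [sum_filter, mul_sum]
    refine sum_le_sum fun s _ => ?_
    have := mul_nonneg (sub_nonneg.2 hμ₁) (bernoulliWeight_nonneg hp₀ (hp.trans hp₁) s)
    unfold thresholdTest
    split_ifs <;> simp_all [t]; linarith
  rw [Fintype.sum_bool, show n * (p₁ - p₀) ^ 2 / 2 = 2 * n * t ^ 2 by ring]
  calc _ ≤ μ * exp (-(2 * n * t ^ 2)) + (1 - μ) * exp (-(2 * n * t ^ 2)) := by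
        gcongr
        · exact hmiss.trans <| by
            gcongr; exact sum_bernoulliWeight_lower_tail_le (hp₀.trans hp) hp₁ ht
        · exact hfalse_alarm.trans <| by
            gcongr; exact sum_bernoulliWeight_upper_tail_le hp₀ (hp.trans hp₁) ht
    _ = exp (-(2 * n * t ^ 2)) := by ring

theorem pow_mem_Icc_one_ninth_one {k N : ℕ} (hN : N ≤ 2 * k - 2) :
    (1 - 2 / (2 * (k : ℝ) + 1)) ^ N ∈ Set.Icc (1 / 9) 1 := by
  rcases N.eq_zero_or_pos with rfl | hN₀
  · norm_num
  have hk : (2 : ℝ) ≤ k := by exact_mod_cast (by omega : 2 ≤ k)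
  have hN' : (N : ℝ) + 2 ≤ 2 * k := by exact_mod_cast (by omega : N + 2 ≤ 2 * k)
  set t : ℝ := 2 / (2 * k - 1)
  have ht : 0 ≤ t := div_nonneg zero_le_two (by linarith)
  have hr : 1 - 2 / (2 * (k : ℝ) + 1) = (1 + t)⁻¹ := by
    have : (2 * k - 1 : ℝ) ≠ 0 := by linarith
    have : (2 * k + 1 : ℝ) ≠ 0 := by linarith
    simp only [t]; field_simp
    rw [eq_div_iff (by linarith)]; ring
  have htN : t * N ≤ 2 := by
    rw [div_mul_eq_mul_div, div_le_iff₀ (by linarith)]; linarith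
  have hexp_two : exp 2 ≤ 9 := by
    rw [show (2 : ℝ) = 1 + 1 by norm_num, exp_add]
    nlinarith [exp_one_lt_three, exp_pos 1]
  rw [hr, inv_pow]
  constructor
  · calc (1 / 9 : ℝ) ≤ (exp 2)⁻¹ := by rw [one_div]; gcongr
      _ ≤ (exp (t * N))⁻¹ := by gcongr
      _ ≤ ((1 + t) ^ N)⁻¹ := by
        rw [mul_comm, exp_nat_mul]
        gcongr
        linarith [add_one_le_exp t]
  · exact inv_le_one_of_one_le₀ (one_le_pow₀ (by linarith))

theorem eight_mul_le_posterior_sub {e y : ℝ} (he₀ : 0 ≤ e) (he₁ : e < 1 / 2)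
    (hy₀ : 0 ≤ y) (hy₁ : y ≤ 1) :
    8 * e * y * (1 - y) ≤ (1 / 2 + e) * y / ((1 / 2 + e) * y + (1 / 2 - e) * (1 - y))
      - (1 / 2 - e) * y / ((1 / 2 - e) * y + (1 / 2 + e) * (1 - y)) := by
  have hD₁ : 0 < (1 / 2 + e) * y + (1 / 2 - e) * (1 - y) := by nlinarith
  have hD₀ : 0 < (1 / 2 - e) * y + (1 / 2 + e) * (1 - y) := by nlinarith
  rw [div_sub_div _ _ hD₁.ne' hD₀.ne', le_div_iff₀ (mul_pos hD₁ hD₀)]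
  -- the difference is `2 e y (1 - y) / (1/4 - (e (2y - 1))²)`
  nlinarith [mul_nonneg (mul_nonneg (mul_nonneg he₀ hy₀) (sub_nonneg.2 hy₁))
    (sq_nonneg (e * (2 * y - 1)))]

theorem one_div_four_mul_mem_Icc (k : ℕ) : 1 / (4 * (k : ℝ)) ∈ Set.Icc 0 (1 / 4) := by
  refine ⟨by positivity, ?_⟩
  calc 1 / (4 * (k : ℝ)) = 1 / 4 * (k : ℝ)⁻¹ := by ring
    _ ≤ 1 / 4 := mul_le_of_le_one_right (by norm_num) (Nat.cast_inv_le_one k)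

section Parameters

variable {k m : ℕ}

theorem yk_mem_Icc (hmk : m ≤ k) : yk k m ∈ Set.Icc (1 / 2) (9 / 10) := by
  obtain ⟨hz₀, hz₁⟩ := pow_mem_Icc_one_ninth_one (k := k) (N := 2 * m - 2) (by omega)
  rw [yk]
  constructor
  · rw [le_div_iff₀ (by linarith)]; linarith
  · rw [div_le_iff₀ (by linarith)]; linarith

theorem muk_mem_Icc (hmk : m ≤ k) : muk k m ∈ Set.Icc 0 1 := by
  obtain ⟨hy₀, hy₁⟩ := yk_mem_Icc hmk
  obtain ⟨he₀, he₁⟩ := one_div_four_mul_mem_Icc k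
  rw [muk, show yk k m / (2 * k) = 2 * (1 / (4 * k)) * yk k m by ring]
  constructor <;> nlinarith

theorem p0k_nonneg (hmk : m ≤ k) : 0 ≤ p0k k m := by
  obtain ⟨hy₀, hy₁⟩ := yk_mem_Icc hmk
  obtain ⟨he₀, he₁⟩ := one_div_four_mul_mem_Icc k
  exact div_nonneg (by nlinarith) (by nlinarith)

theorem p1k_le_one (hmk : m ≤ k) : p1k k m ≤ 1 := by
  obtain ⟨hy₀, hy₁⟩ := yk_mem_Icc hmk
  obtain ⟨he₀, he₁⟩ := one_div_four_mul_mem_Icc k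
  exact div_le_one_of_le₀ (by nlinarith) (by nlinarith)

theorem one_div_six_mul_le_p1k_sub_p0k (hmk : m ≤ k) :
    1 / (6 * (k : ℝ)) ≤ p1k k m - p0k k m := by
  obtain ⟨hy₀, hy₁⟩ := yk_mem_Icc hmk
  obtain ⟨he₀, he₁⟩ := one_div_four_mul_mem_Icc k
  have hy : 1 / 12 ≤ yk k m * (1 - yk k m) := by nlinarith
  calc 1 / (6 * (k : ℝ)) = 8 * (1 / (4 * k)) * (1 / 12) := by ring
    _ ≤ 8 * (1 / (4 * k)) * yk k m * (1 - yk k m) := by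
        rw [mul_assoc _ (yk k m)]; gcongr
    _ ≤ p1k k m - p0k k m :=
        eight_mul_le_posterior_sub he₀ (by linarith) (by linarith) (by linarith)

end Parameters

open Classical in
theorem stmt_18_general (k n m : ℕ) (hmk : m ≤ k) :
    ∃ h : ℕ → Bool,
      (∑ b : Bool, ∑ s : Fin n → Bool,
        ((if b then muk k m else 1 - muk k m) *
          ∏ i, (if s i then (if b then p1k k m else p0k k m)
                 else 1 - (if b then p1k k m else p0k k m))) *
        (if h (∑ i, if s i then 1 else 0) = b then (0:ℝ) else 1))
      ≤ Real.exp (-(n:ℝ)/(72*(k:ℝ)^2)) := by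
  have hgap := one_div_six_mul_le_p1k_sub_p0k hmk
  have hgap₀ : 0 ≤ 1 / (6 * (k : ℝ)) := by positivity
  refine ⟨thresholdTest n (p0k k m) (p1k k m),
    (thresholdTest_error_le (muk_mem_Icc hmk).1 (muk_mem_Icc hmk).2 (p0k_nonneg hmk)
      (p1k_le_one hmk) (by linarith)).trans (exp_le_exp.2 ?_)⟩
  calc -(n * (p1k k m - p0k k m) ^ 2 / 2) ≤ -(n * (1 / (6 * k)) ^ 2 / 2) := by gcongr
    _ = -(n : ℝ) / (72 * k ^ 2) := by ring

open Classical in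
/-- Lemma 3: under `I(m)` with `ω ~ Bernoulli(μ_m)` and, conditional on `ω`,
`n` i.i.d. Bernoulli(p_ω) forecasts, some function of the number of high forecasts predicts
`ω` with error probability at most `exp(-n/(72k²))`. -/
theorem stmt_18 (k n m : ℕ) (hk : 1 ≤ k) (hn : 1 ≤ n) (hm : 1 ≤ m) (hmk : m ≤ k) :
    ∃ h : ℕ → Bool,
      (∑ b : Bool, ∑ s : Fin n → Bool,
        ((if b then muk k m else 1 - muk k m) *
          ∏ i, (if s i then (if b then p1k k m else p0k k m)
                 else 1 - (if b then p1k k m else p0k k m))) *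
        (if h (∑ i, if s i then 1 else 0) = b then (0:ℝ) else 1))
      ≤ Real.exp (-(n:ℝ)/(72*(k:ℝ)^2)) :=
  stmt_18_general k n m hmk
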